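/- Let G = C(n; a_1,b_1; a_2,b_2) be a 2-paired circulant with n = lcm(a_1·b_1, a_2·b_2). Suppose that a_1 > 1, a_2 > 1, gcd(a_1, a_2·b_2) = 1, gcd(a_2, a_1·b_1) = 1, and gcd(b_1, b_2) > 1. Then G has a stable set S' of size 3 such that every stable set S of G with S' ⊆ S satisfies |S| < a_1·a_2. -/

import Mathlib

open SimpleGraph Finset

/-- The circulant graph `C_n(D)` on vertex set `ZMod n` with distance set
`D ⊆ {1, …, n-1}`: distinct vertices `i, j` are adjacent iff `(i - j) mod n ∈ D`. -/
def circulant (n : ℕ) (D : Finset ℕ) : SimpleGraph (ZMod n) :=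
  SimpleGraph.fromRel (fun i j => (i - j).val ∈ D)

/-- A graph is a CIS graph if every maximal clique and every maximal stable set
(equivalently, every maximal clique of the complement) intersect. -/
def SimpleGraph.IsCIS {V : Type*} (G : SimpleGraph V) : Prop :=
  ∀ C S : Set V, Maximal G.IsClique C → Maximal Gᶜ.IsClique S → (C ∩ S).Nonempty

/-- The distance set `{d ∈ {1,…,n-1} : a ∣ d ∧ a*b ∤ d}` of a pair `(a, b)`. -/
def pairedD (n a b : ℕ) : Finset ℕ :=
  (Finset.Icc 1 (n - 1)).filter (fun d => a ∣ d ∧ ¬ (a * b) ∣ d)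

/-- The `k`-paired circulant `C(n; a_1,b_1; …; a_k,b_k)` (index type `ι`). -/
def pairedCirculant (n : ℕ) {ι : Type*} [Fintype ι] (a b : ι → ℕ) : SimpleGraph (ZMod n) :=
  circulant n (Finset.univ.biUnion (fun i => pairedD n (a i) (b i)))

/-- The lexicographic product of two simple graphs. -/
def lexProd {α β : Type*} (G : SimpleGraph α) (H : SimpleGraph β) : SimpleGraph (α × β) where
  Adj p q := G.Adj p.1 q.1 ∨ (p.1 = q.1 ∧ H.Adj p.2 q.2)
  symm := by
    constructor
    intro p q h
    rcases h with h | ⟨h1, h2⟩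
    · exact Or.inl h.symm
    · exact Or.inr ⟨h1.symm, h2.symm⟩
  loopless := by
    constructor
    intro p h
    rcases h with h | ⟨_, h⟩
    · exact G.irrefl h
    · exact H.irrefl h


/-!
Reducing modulo `a₁` and modulo `a₂` is injective on a stable set `S`: two vertices with the
same residues differ by a multiple of `a₁b₁` and of `a₂b₂`, hence of `n`. If `0, 1 ∈ S`, the
residue pair `(0, 1)` is missed: a vertex `z ≠ 0, 1` with `z ≡ 0 (mod a₁)` and `z ≡ 1 (mod a₂)`
would satisfy `z ≡ 0 (mod a₁b₁)` and `z ≡ 1 (mod a₂b₂)`, so `gcd(b₁, b₂)` would divide `1`.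
Hence `|S| < a₁a₂`. Finally `{0, 1}` extends to a stable triple by a vertex `X` with
`X ≡ 0 (mod a₁b₁)` and `X ≡ 2 (mod a₂)` when `a₂ > 2`, and symmetrically when `a₁ > 2`.
-/

namespace ZMod

variable {n m : ℕ} [NeZero n]

lemma cast_eq_cast_iff_dvd_val_sub (h : m ∣ n) (u v : ZMod n) :
    (cast u : ZMod m) = cast v ↔ m ∣ (u - v).val := by
  rw [← sub_eq_zero, ← cast_sub h, cast_eq_val, natCast_eq_zero_iff]

lemma cast_eq_cast_of_dvd {k : ℕ} (hmk : m ∣ k) (hk : k ∣ n) {u v : ZMod n}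
    (huv : (cast u : ZMod k) = cast v) : (cast u : ZMod m) = cast v := by
  rw [cast_eq_cast_iff_dvd_val_sub hk] at huv
  exact (cast_eq_cast_iff_dvd_val_sub (hmk.trans hk) u v).2 (hmk.trans huv)

lemma eq_of_cast_eq_of_cast_eq {m₁ m₂ : ℕ} (hm₁ : m₁ ∣ n) (hm₂ : m₂ ∣ n)
    (hn : n ∣ m₁.lcm m₂) {u v : ZMod n} (h₁ : (cast u : ZMod m₁) = cast v)
    (h₂ : (cast u : ZMod m₂) = cast v) : u = v := by
  rw [cast_eq_cast_iff_dvd_val_sub hm₁] at h₁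
  rw [cast_eq_cast_iff_dvd_val_sub hm₂] at h₂
  rw [← sub_eq_zero, ← val_eq_zero]
  exact Nat.eq_zero_of_dvd_of_lt (hn.trans (Nat.lcm_dvd h₁ h₂)) (val_lt _)

end ZMod

theorem Set.ncard_lt_card_of_injOn {α β : Type*} [Finite β] {s : Set α} {f : α → β}
    (hf : s.InjOn f) {y : β} (hy : ∀ x ∈ s, f x ≠ y) : s.ncard < Nat.card β := by
  rw [← hf.ncard_image]
  refine Set.ncard_lt_card fun h => ?_
  obtain ⟨x, hx, hxy⟩ : y ∈ f '' s := h ▸ Set.mem_univ y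
  exact hy x hx hxy

lemma val_sub_mem_pairedD_iff {n a b : ℕ} [NeZero n] (hab : a * b ∣ n) (u v : ZMod n) :
    (u - v).val ∈ pairedD n a b ↔
      u ≠ v ∧ (ZMod.cast u : ZMod a) = ZMod.cast v ∧
        (ZMod.cast u : ZMod (a * b)) ≠ ZMod.cast v := by
  have hne : 1 ≤ (u - v).val ∧ (u - v).val ≤ n - 1 ↔ u ≠ v := by
    rw [← sub_ne_zero, ← ZMod.val_ne_zero]
    have := ZMod.val_lt (u - v)
    omega
  rw [pairedD, mem_filter, mem_Icc, hne, ne_eq, ne_eq,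
    ZMod.cast_eq_cast_iff_dvd_val_sub (dvd_of_mul_right_dvd hab),
    ZMod.cast_eq_cast_iff_dvd_val_sub hab]

section TwoPaired

variable {n a1 b1 a2 b2 : ℕ} [NeZero n] (h1 : a1 * b1 ∣ n) (h2 : a2 * b2 ∣ n)
include h1 h2

lemma compl_adj_iff {u v : ZMod n} :
    (circulant n (pairedD n a1 b1 ∪ pairedD n a2 b2))ᶜ.Adj u v ↔ u ≠ v ∧
      ((ZMod.cast u : ZMod a1) = ZMod.cast v →
        (ZMod.cast u : ZMod (a1 * b1)) = ZMod.cast v) ∧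
      ((ZMod.cast u : ZMod a2) = ZMod.cast v →
        (ZMod.cast u : ZMod (a2 * b2)) = ZMod.cast v) := by
  simp only [compl_adj, circulant, fromRel_adj, mem_union, val_sub_mem_pairedD_iff h1,
    val_sub_mem_pairedD_iff h2, ne_comm (a := v), eq_comm (a := ZMod.cast v)]
  tauto

variable {S : Set (ZMod n)} (hS : (circulant n (pairedD n a1 b1 ∪ pairedD n a2 b2))ᶜ.IsClique S)
include hS

lemma injOn_cast_prod_of_isClique_compl (hn : n ∣ (a1 * b1).lcm (a2 * b2)) :
    S.InjOn fun z : ZMod n => ((ZMod.cast z : ZMod a1), (ZMod.cast z : ZMod a2)) := by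
  intro z hz w hw hzw
  by_contra hne
  obtain ⟨-, h₁, h₂⟩ := (compl_adj_iff h1 h2).1 (hS hz hw hne)
  exact hne (ZMod.eq_of_cast_eq_of_cast_eq h1 h2 hn (h₁ congr($hzw.1)) (h₂ congr($hzw.2)))

lemma not_cast_eq_zero_one_of_isClique_compl (ha1 : 1 < a1) (ha2 : 1 < a2)
    (hg : 1 < b1.gcd b2) (h0S : 0 ∈ S) (h1S : 1 ∈ S) {z : ZMod n} (hz : z ∈ S) :
    ¬((ZMod.cast z : ZMod a1) = 0 ∧ (ZMod.cast z : ZMod a2) = 1) := by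
  have : Fact (1 < a1) := ⟨ha1⟩
  have : Fact (1 < a2) := ⟨ha2⟩
  have : Fact (1 < b1.gcd b2) := ⟨hg⟩
  have ha1n : a1 ∣ n := dvd_of_mul_right_dvd h1
  have ha2n : a2 ∣ n := dvd_of_mul_right_dvd h2
  have hg1 : b1.gcd b2 ∣ a1 * b1 := (Nat.gcd_dvd_left b1 b2).mul_left a1
  have hg2 : b1.gcd b2 ∣ a2 * b2 := (Nat.gcd_dvd_right b1 b2).mul_left a2
  rintro ⟨hz1, hz2⟩
  have hz0 : z ≠ 0 := by
    rintro rfl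
    simp at hz2
  have hz1' : z ≠ 1 := by
    rintro rfl
    simp [ZMod.cast_one ha1n] at hz1
  have hz0g := ZMod.cast_eq_cast_of_dvd hg1 h1
    (((compl_adj_iff h1 h2).1 (hS hz h0S hz0)).2.1 (by rw [hz1, ZMod.cast_zero]))
  have hz1g := ZMod.cast_eq_cast_of_dvd hg2 h2
    (((compl_adj_iff h1 h2).1 (hS hz h1S hz1')).2.2 (by rw [hz2, ZMod.cast_one ha2n]))
  rw [ZMod.cast_zero] at hz0g
  rw [ZMod.cast_one (hg2.trans h2), hz0g] at hz1g
  exact zero_ne_one hz1g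

theorem ncard_lt_of_isClique_compl (ha1 : 1 < a1) (ha2 : 1 < a2)
    (hn : n ∣ (a1 * b1).lcm (a2 * b2)) (hg : 1 < b1.gcd b2) (h0S : 0 ∈ S) (h1S : 1 ∈ S) :
    S.ncard < a1 * a2 := by
  have : NeZero a1 := ⟨by omega⟩
  have : NeZero a2 := ⟨by omega⟩
  calc S.ncard < Nat.card (ZMod a1 × ZMod a2) :=
        Set.ncard_lt_card_of_injOn (injOn_cast_prod_of_isClique_compl h1 h2 hS hn) (y := (0, 1))
          fun z hz hzy => not_cast_eq_zero_one_of_isClique_compl h1 h2 hS ha1 ha2 hg h0S h1S hz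
            (Prod.mk.inj hzy)
    _ = a1 * a2 := by rw [Nat.card_prod, Nat.card_zmod, Nat.card_zmod]

omit hS

theorem exists_isNClique_compl_zero_one (ha1 : 1 < a1) (ha2 : 2 < a2)
    (hcop : Nat.Coprime a2 (a1 * b1)) :
    ∃ X : ZMod n, (circulant n (pairedD n a1 b1 ∪ pairedD n a2 b2))ᶜ.IsNClique 3 {0, 1, X} := by
  have : Fact (1 < a1) := ⟨ha1⟩
  have : Fact (1 < a2) := ⟨by omega⟩
  have ha1n : a1 ∣ n := dvd_of_mul_right_dvd h1
  have ha2n : a2 ∣ n := dvd_of_mul_right_dvd h2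
  have : Fact (1 < n) := ⟨ha1.trans_le (Nat.le_of_dvd (NeZero.pos n) ha1n)⟩
  have h20 : (2 : ZMod a2) ≠ 0 := fun h =>
    absurd (Nat.le_of_dvd two_pos ((ZMod.natCast_eq_zero_iff 2 a2).1 (mod_cast h))) (by omega)
  have h21 : (2 : ZMod a2) ≠ 1 := fun h => one_ne_zero (by linear_combination h)
  obtain ⟨k, hk1, hk2⟩ := Nat.chineseRemainder hcop.symm 0 2
  set X : ZMod n := (k : ZMod n)
  have hX : (ZMod.cast X : ZMod (a1 * b1)) = ZMod.cast (0 : ZMod n) := by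
    rw [ZMod.cast_natCast h1, ZMod.cast_zero, ← Nat.cast_zero, ZMod.natCast_eq_natCast_iff]
    exact hk1
  have hXa1 : (ZMod.cast X : ZMod a1) = 0 := by
    simpa using ZMod.cast_eq_cast_of_dvd (dvd_mul_right a1 b1) h1 hX
  have hXa2 : (ZMod.cast X : ZMod a2) = 2 := by
    rw [ZMod.cast_natCast ha2n]
    exact_mod_cast (ZMod.natCast_eq_natCast_iff _ _ _).2 hk2
  have hX0 : X ≠ 0 := fun h => h20 (by rw [← hXa2, h, ZMod.cast_zero])
  have hX1 : X ≠ 1 := fun h => h21 (by rw [← hXa2, h, ZMod.cast_one ha2n])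
  refine ⟨X, is3Clique_triple_iff.2 ⟨?_, ?_, ?_⟩⟩ <;> rw [compl_adj_iff h1 h2] <;>
    simp [ZMod.cast_one ha1n, ZMod.cast_one ha2n, hX, hXa1, hXa2, hX0.symm, hX1.symm,
      h20.symm, h21.symm]

end TwoPaired

theorem stmt_16_general (n a1 b1 a2 b2 : ℕ) (hn : 0 < n)
    (ha1 : 1 < a1) (ha2 : 1 < a2)
    (h1 : a1 * b1 ∣ n) (h2 : a2 * b2 ∣ n)
    (hlcm : n = Nat.lcm (a1 * b1) (a2 * b2))
    (hg1 : Nat.gcd a1 (a2 * b2) = 1) (hg2 : Nat.gcd a2 (a1 * b1) = 1)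
    (hg3 : 1 < Nat.gcd b1 b2) :
    ∃ S' : Set (ZMod n),
      (circulant n (pairedD n a1 b1 ∪ pairedD n a2 b2))ᶜ.IsClique S' ∧ S'.ncard = 3 ∧
      ∀ S : Set (ZMod n),
        (circulant n (pairedD n a1 b1 ∪ pairedD n a2 b2))ᶜ.IsClique S → S' ⊆ S →
        S.ncard < a1 * a2 := by
  have : NeZero n := ⟨hn.ne'⟩
  have h12 : 2 < a2 ∨ 2 < a1 := by
    have : Nat.Coprime a1 a2 := Nat.Coprime.coprime_dvd_right (dvd_mul_right a2 b2) hg1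
    by_contra! h
    obtain rfl : a1 = 2 := by omega
    obtain rfl : a2 = 2 := by omega
    norm_num at this
  obtain ⟨X, hX⟩ : ∃ X : ZMod n,
      (circulant n (pairedD n a1 b1 ∪ pairedD n a2 b2))ᶜ.IsNClique 3 {0, 1, X} := by
    rcases h12 with h | h
    · exact exists_isNClique_compl_zero_one h1 h2 ha1 h hg2
    · rw [Finset.union_comm]
      exact exists_isNClique_compl_zero_one h2 h1 ha2 h hg1
  refine ⟨_, hX.isClique, by rw [Set.ncard_coe_finset, hX.card_eq], fun S hS hsub => ?_⟩
  exact ncard_lt_of_isClique_compl h1 h2 hS ha1 ha2 (hlcm ▸ dvd_rfl) hg3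
    (hsub (by simp)) (hsub (by simp))

/-- Under the stated gcd conditions, a 2-paired circulant with
`n = lcm(a₁b₁, a₂b₂)` has a stable set `S'` of size 3 such that every stable set containing
`S'` has size `< a₁a₂`. -/
theorem stmt_16 (n a1 b1 a2 b2 : ℕ) (hn : 0 < n)
    (ha1 : 1 < a1) (hb1 : 0 < b1) (ha2 : 1 < a2) (hb2 : 0 < b2)
    (h1 : a1 * b1 ∣ n) (h2 : a2 * b2 ∣ n)
    (hlcm : n = Nat.lcm (a1 * b1) (a2 * b2))
    (hg1 : Nat.gcd a1 (a2 * b2) = 1) (hg2 : Nat.gcd a2 (a1 * b1) = 1)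
    (hg3 : 1 < Nat.gcd b1 b2) :
    ∃ S' : Set (ZMod n),
      (circulant n (pairedD n a1 b1 ∪ pairedD n a2 b2))ᶜ.IsClique S' ∧ S'.ncard = 3 ∧
      ∀ S : Set (ZMod n),
        (circulant n (pairedD n a1 b1 ∪ pairedD n a2 b2))ᶜ.IsClique S → S' ⊆ S →
        S.ncard < a1 * a2 :=
  stmt_16_general n a1 b1 a2 b2 hn ha1 ha2 h1 h2 hlcm hg1 hg2 hg3
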